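/- Let E be a separable real Banach space, let T : E → E be a continuous linear operator, and let γ, π, ρ_γ, ρ_π be Borel probability measures on E such that ((γ ∘ T⁻¹) ∗ ρ_γ) = γ and ((π ∘ T⁻¹) ∗ ρ_π) = π. Let 1 < p ≤ q < ∞ and assume that for every bounded Borel g : E → ℝ, (∫_E |P_T^γ g|^q dγ)^{1/q} ≤ (∫_E |g|^p dγ)^{1/p}, where P_T^γ g(x) := ∫_E g(T(x)+z) dρ_γ(z). Then for every bounded Borel f : E → ℝ, setting P_T f(x) := ∫_E f(T(x)+z) d(ρ_γ∗ρ_π)(z), one has ‖P_T f‖_{p,q} ≤ ‖f‖_{p,q}, where both mixed norms are taken with respect to (γ, π); that is, P_T acts as a contraction for the mixed norm ‖·‖_{p,q}. -/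

import Mathlib

/-!
Write `N w` for the `L^p(γ)` norm of the translate `f (· + w)`. Since `T` is additive,
`P_T f (x + y) = ∫ P_T^γ (f (· + T y + v)) x dρ_π(v)`, so Minkowski's integral inequality, the
monotonicity of `L^p(γ)` norms in `p` on a probability space and hypercontractivity give
`‖P_T f (· + y)‖_{L^p(γ)} ≤ ∫ N (T y + v) dρ_π(v)`. Jensen's inequality for `t ↦ t^q` and the
invariance `(π ∘ T⁻¹) ∗ ρ_π = π` then bound `∫ (∫ N (T y + v) dρ_π(v))^q dπ(y)` by `∫ N^q dπ`.
-/

open MeasureTheory ENNReal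

noncomputable def mconv {E : Type*} [MeasurableSpace E] [Add E]
    (μ ν : Measure E) : Measure E :=
  (μ.prod ν).map (fun z => z.1 + z.2)

/-- The mixed norm `‖f‖_{p,q}` with respect to `(μ₁, μ₂)`, with values in `[0,∞]`. -/
noncomputable def mixedNorm {E : Type*} [MeasurableSpace E] [Add E]
    (p q : ℝ) (μ₁ μ₂ : Measure E) (f : E → ℝ) : ℝ≥0∞ :=
  (∫⁻ y, (∫⁻ x, (ENNReal.ofReal |f (x + y)|) ^ p ∂μ₁) ^ (q / p) ∂μ₂) ^ (1 / q)

namespace ENNReal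

theorem rpow_one_div_le_of_le_rpow_mul {a b : ℝ≥0∞} {p r : ℝ} (hpr : p.HolderConjugate r)
    (ha : a ≠ ∞) (h : a ≤ a ^ (1 / r) * b) : a ^ (1 / p) ≤ b := by
  rcases eq_or_ne a 0 with rfl | ha₀
  · simp [zero_rpow_of_pos (inv_pos.2 hpr.pos)]
  have hsplit : a = a ^ (1 / r) * a ^ (1 / p) := by
    rw [← rpow_add _ _ ha₀ ha, one_div, one_div, hpr.symm.inv_add_inv_eq_one, rpow_one]
  have hr₀ : a ^ (1 / r) ≠ 0 := (rpow_pos (pos_iff_ne_zero.2 ha₀) ha).ne'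
  have hr_top : a ^ (1 / r) ≠ ∞ := rpow_ne_top_of_nonneg (one_div_pos.2 hpr.symm.pos).le ha
  nth_rewrite 1 [hsplit] at h
  exact (ENNReal.mul_le_mul_iff_right hr₀ hr_top).1 h

end ENNReal

section LpInequalities

variable {α β : Type*} [MeasurableSpace α] [MeasurableSpace β] {μ : Measure α} {ν : Measure β}
  {p : ℝ}

theorem rpow_lintegral_le_lintegral_rpow [IsProbabilityMeasure μ] {g : α → ℝ≥0∞}
    (hg : AEMeasurable g μ) {q : ℝ} (hq : 1 ≤ q) :
    (∫⁻ x, g x ∂μ) ^ q ≤ ∫⁻ x, g x ^ q ∂μ := by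
  have h := eLpNorm'_le_eLpNorm'_of_exponent_le one_pos hq μ hg.aestronglyMeasurable
  simp only [eLpNorm', enorm_eq_self, rpow_one, div_one, one_div] at h
  exact (le_rpow_inv_iff (by linarith)).1 h

theorem eLpNorm'_lintegral_le [SFinite μ] [SFinite ν] {H : α → β → ℝ≥0∞}
    (hH : Measurable (Function.uncurry H)) (hp : 1 < p)
    (hfin : ∫⁻ x, (∫⁻ v, H x v ∂ν) ^ p ∂μ ≠ ∞) :
    eLpNorm' (fun x => ∫⁻ v, H x v ∂ν) p μ ≤ ∫⁻ v, eLpNorm' (H · v) p μ ∂ν := by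
  have hpr : p.HolderConjugate p.conjExponent := .conjExponent hp
  set Φ := fun x => ∫⁻ v, H x v ∂ν
  have hΦ : Measurable Φ := hH.lintegral_prod_right'
  simp only [eLpNorm', enorm_eq_self] at hfin ⊢
  refine rpow_one_div_le_of_le_rpow_mul hpr hfin ?_
  calc ∫⁻ x, Φ x ^ p ∂μ = ∫⁻ x, ∫⁻ v, Φ x ^ (p - 1) * H x v ∂ν ∂μ := by
        refine lintegral_congr fun x => ?_
        rw [lintegral_const_mul _ hH.of_uncurry_left]
        conv_lhs => rw [← sub_add_cancel p 1, rpow_add_of_nonneg _ _ (by linarith) zero_le_one,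
          rpow_one]
    _ = ∫⁻ v, ∫⁻ x, Φ x ^ (p - 1) * H x v ∂μ ∂ν :=
        lintegral_lintegral_swap (((hΦ.comp measurable_fst).pow_const _).mul hH).aemeasurable
    _ ≤ ∫⁻ v, (∫⁻ x, Φ x ^ p ∂μ) ^ (1 / p.conjExponent) * (∫⁻ x, H x v ^ p ∂μ) ^ (1 / p) ∂ν := by
        refine lintegral_mono fun v => ?_
        have holder := lintegral_mul_le_Lp_mul_Lq μ hpr.symm
          (hΦ.pow_const (p - 1)).aemeasurable (hH.of_uncurry_right (y := v)).aemeasurable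
        simp only [← rpow_mul, hpr.sub_one_mul_conj] at holder
        exact holder
    _ = _ := lintegral_const_mul _ <|
        (Measurable.lintegral_prod_left' (hH.pow_const p)).pow_const _

theorem eLpNorm'_integral_le [IsFiniteMeasure μ] [IsFiniteMeasure ν]
    {G : Type*} [NormedAddCommGroup G] [NormedSpace ℝ G] {F : α → β → G}
    (hF : StronglyMeasurable (Function.uncurry F)) {C : ℝ} (hC : ∀ x v, ‖F x v‖ ≤ C)
    (hp : 1 < p) :
    eLpNorm' (fun x => ∫ v, F x v ∂ν) p μ ≤ ∫⁻ v, eLpNorm' (F · v) p μ ∂ν := by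
  have hbound : ∀ x, ∫⁻ v, ‖F x v‖ₑ ∂ν ≤ .ofReal C * ν Set.univ := fun x =>
    (lintegral_mono fun v => (ofReal_norm _).symm.trans_le (ofReal_le_ofReal (hC x v))).trans_eq
      (lintegral_const _)
  have hfin : ∫⁻ x, (∫⁻ v, ‖F x v‖ₑ ∂ν) ^ p ∂μ ≠ ∞ := by
    refine ne_top_of_le_ne_top ?_ (lintegral_mono fun x => rpow_le_rpow (hbound x) (by linarith))
    simp only [lintegral_const]
    finiteness
  calc eLpNorm' (fun x => ∫ v, F x v ∂ν) p μ
      ≤ eLpNorm' (fun x => ∫⁻ v, ‖F x v‖ₑ ∂ν) p μ :=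
        eLpNorm'_mono_enorm_ae (by linarith) <| .of_forall fun x => by
          simpa only [enorm_eq_self] using enorm_integral_le_lintegral_enorm _
    _ ≤ ∫⁻ v, eLpNorm' (fun x => ‖F x v‖ₑ) p μ ∂ν :=
        eLpNorm'_lintegral_le (H := fun x v => ‖F x v‖ₑ) hF.enorm hp hfin
    _ = ∫⁻ v, eLpNorm' (F · v) p μ ∂ν := by simp only [eLpNorm', enorm_enorm]

end LpInequalities

section Convolution

variable {E : Type*} [MeasurableSpace E] [Add E] [MeasurableAdd₂ E]

instance (μ ν : Measure E) [IsFiniteMeasure μ] [IsFiniteMeasure ν] :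
    IsFiniteMeasure (mconv μ ν) := by
  unfold mconv; infer_instance

theorem lintegral_mconv (μ ν : Measure E) [SFinite ν] {g : E → ℝ≥0∞} (hg : Measurable g) :
    ∫⁻ z, g z ∂(mconv μ ν) = ∫⁻ x, ∫⁻ y, g (x + y) ∂ν ∂μ := by
  rw [mconv, lintegral_map hg measurable_add, lintegral_prod (fun z : E × E => g (z.1 + z.2))
    (hg.comp measurable_add).aemeasurable]

theorem integral_mconv {μ ν : Measure E} [SFinite μ] [SFinite ν] {f : E → ℝ}
    (hf : Integrable f (mconv μ ν)) :
    ∫ z, f z ∂(mconv μ ν) = ∫ y, ∫ x, f (x + y) ∂μ ∂ν := by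
  have hf' : Integrable (fun z : E × E => f (z.1 + z.2)) (μ.prod ν) :=
    (integrable_map_measure hf.1 measurable_add.aemeasurable).1 hf
  rw [mconv, integral_map measurable_add.aemeasurable hf.1, integral_prod _ hf']
  exact integral_integral_swap (f := fun x y => f (x + y)) hf'

theorem measurable_eLpNorm'_comp_add (μ : Measure E) [SFinite μ] {f : E → ℝ} (hf : Measurable f)
    (p : ℝ) : Measurable fun y => eLpNorm' (fun x => f (x + y)) p μ :=
  (Measurable.lintegral_prod_left' ((hf.comp measurable_add).enorm.pow_const p)).pow_const _

end Convolution

theorem mixedNorm_eq_lintegral_eLpNorm' {E : Type*} [MeasurableSpace E] [Add E] (p q : ℝ)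
    (μ₁ μ₂ : Measure E) (f : E → ℝ) :
    mixedNorm p q μ₁ μ₂ f = (∫⁻ y, eLpNorm' (fun x => f (x + y)) p μ₁ ^ q ∂μ₂) ^ (1 / q) := by
  simp only [mixedNorm, eLpNorm', Real.enorm_eq_ofReal_abs, ← rpow_mul, one_div_mul_eq_div]

theorem eLpNorm'_eq_lintegral_ofReal_abs_rpow {α : Type*} [MeasurableSpace α] (μ : Measure α)
    (f : α → ℝ) {p : ℝ} (hp : 0 ≤ p) :
    eLpNorm' f p μ = (∫⁻ x, ENNReal.ofReal (|f x| ^ p) ∂μ) ^ (1 / p) := by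
  simp only [eLpNorm', Real.enorm_eq_ofReal_abs, ofReal_rpow_of_nonneg (abs_nonneg _) hp]

/-- `P_T` of the statement when `ρ = ρ_γ ∗ ρ_π`, and `P_T^γ` when `ρ = ρ_γ`. -/
noncomputable def transitionOp {E : Type*} [MeasurableSpace E] [Add E] (T : E → E)
    (ρ : Measure E) (f : E → ℝ) (x : E) : ℝ :=
  ∫ z, f (T x + z) ∂ρ

theorem abs_transitionOp_le {E : Type*} [MeasurableSpace E] [Add E] (T : E → E) (ρ : Measure E)
    [IsProbabilityMeasure ρ] {f : E → ℝ} {C : ℝ} (hC : ∀ x, |f x| ≤ C) (x : E) :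
    |transitionOp T ρ f x| ≤ C := by
  unfold transitionOp
  simpa using norm_integral_le_of_norm_le_const (μ := ρ) (C := C)
    (.of_forall fun z => (Real.norm_eq_abs _).trans_le (hC (T x + z)))

section TransitionOp

variable {E : Type*} [MeasurableSpace E] [AddCommMonoid E] [MeasurableAdd₂ E]
  {F : Type*} [FunLike F E E] [AddHomClass F E E] {ρ₁ ρ₂ : Measure E} {f : E → ℝ} {C : ℝ}

theorem transitionOp_mconv_add [IsFiniteMeasure ρ₁] [IsFiniteMeasure ρ₂] (T : F)
    (hf : Measurable f) (hC : ∀ x, |f x| ≤ C) (x y : E) :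
    transitionOp T (mconv ρ₁ ρ₂) f (x + y)
      = ∫ v, transitionOp T ρ₁ (fun w => f (w + (T y + v))) x ∂ρ₂ := by
  rw [transitionOp, integral_mconv (f := fun z => f (T (x + y) + z)) <|
    .of_bound (hf.comp (measurable_const_add _)).aestronglyMeasurable C
      (.of_forall fun z => (Real.norm_eq_abs _).trans_le (hC _))]
  simp only [transitionOp, map_add, add_add_add_comm]

theorem eLpNorm'_transitionOp_mconv_le {γ : Measure E} [IsProbabilityMeasure γ]
    [IsProbabilityMeasure ρ₁] [IsFiniteMeasure ρ₂] (T : F) (hT : Measurable T) {p q : ℝ}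
    (hp : 1 < p) (hpq : p ≤ q)
    (hhyper : ∀ g : E → ℝ, Measurable g → (∃ C, ∀ x, |g x| ≤ C) →
      eLpNorm' (transitionOp T ρ₁ g) q γ ≤ eLpNorm' g p γ)
    (hf : Measurable f) (hC : ∀ x, |f x| ≤ C) (y : E) :
    eLpNorm' (fun x => transitionOp T (mconv ρ₁ ρ₂) f (x + y)) p γ
      ≤ ∫⁻ v, eLpNorm' (fun x => f (x + (T y + v))) p γ ∂ρ₂ := by
  set g : E → E → ℝ := fun v w => f (w + (T y + v))
  have hPg : StronglyMeasurable (Function.uncurry fun x v => transitionOp T ρ₁ (g v) x) :=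
    (hf.comp (by fun_prop : Measurable fun z : (E × E) × E => T z.1.1 + z.2 + (T y + z.1.2))
      ).stronglyMeasurable.integral_prod_right'
  simp_rw [transitionOp_mconv_add T hf hC]
  calc _ ≤ ∫⁻ v, eLpNorm' (fun x => transitionOp T ρ₁ (g v) x) p γ ∂ρ₂ :=
        eLpNorm'_integral_le hPg
          (fun x v => (Real.norm_eq_abs _).trans_le (abs_transitionOp_le _ _ (fun _ => hC _) x)) hp
    _ ≤ ∫⁻ v, eLpNorm' (transitionOp T ρ₁ (g v)) q γ ∂ρ₂ := lintegral_mono fun v =>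
        eLpNorm'_le_eLpNorm'_of_exponent_le (by linarith) hpq γ
          hPg.measurable.of_uncurry_right.aestronglyMeasurable
    _ ≤ _ := lintegral_mono fun v =>
        hhyper _ (hf.comp (measurable_add_const _)) ⟨C, fun _ => hC _⟩

end TransitionOp

theorem PT_mixedNorm_contraction_general
    {E : Type*} [NormedAddCommGroup E] [NormedSpace ℝ E]
    [TopologicalSpace.SeparableSpace E] [MeasurableSpace E] [BorelSpace E]
    (T : E →L[ℝ] E) (γ π ργ ρπ : Measure E)
    [IsProbabilityMeasure γ]
    [IsProbabilityMeasure ργ] [IsProbabilityMeasure ρπ]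
    (hπ : mconv (π.map T) ρπ = π)
    (p q : ℝ) (hp : 1 < p) (hpq : p ≤ q)
    (hhyper : ∀ g : E → ℝ, Measurable g → (∃ C, ∀ x, |g x| ≤ C) →
      (∫⁻ x, ENNReal.ofReal (|∫ z, g (T x + z) ∂ργ| ^ q) ∂γ) ^ (1 / q)
        ≤ (∫⁻ x, ENNReal.ofReal (|g x| ^ p) ∂γ) ^ (1 / p))
    (f : E → ℝ) (hf : Measurable f) (hfb : ∃ C, ∀ x, |f x| ≤ C) :
    mixedNorm p q γ π (fun x => ∫ z, f (T x + z) ∂(mconv ργ ρπ))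
      ≤ mixedNorm p q γ π f := by
  obtain ⟨C, hC⟩ := hfb
  have hq : 0 < q := by linarith
  have hT : Measurable T := T.continuous.measurable
  have hhyper' : ∀ g : E → ℝ, Measurable g → (∃ C, ∀ x, |g x| ≤ C) →
      eLpNorm' (transitionOp T ργ g) q γ ≤ eLpNorm' g p γ := fun g hg hgb => by
    simpa only [eLpNorm'_eq_lintegral_ofReal_abs_rpow _ _ hq.le,
      eLpNorm'_eq_lintegral_ofReal_abs_rpow _ _ (by linarith : 0 ≤ p),
      transitionOp] using hhyper g hg hgb
  set N := fun w => eLpNorm' (fun x => f (x + w)) p γ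
  have hN : Measurable N := measurable_eLpNorm'_comp_add γ hf p
  rw [mixedNorm_eq_lintegral_eLpNorm', mixedNorm_eq_lintegral_eLpNorm']
  refine rpow_le_rpow ?_ (one_div_pos.2 hq).le
  calc ∫⁻ y, eLpNorm' (fun x => transitionOp T (mconv ργ ρπ) f (x + y)) p γ ^ q ∂π
      ≤ ∫⁻ y, (∫⁻ v, N (T y + v) ∂ρπ) ^ q ∂π := by
        gcongr with y; exact eLpNorm'_transitionOp_mconv_le T hT hp hpq hhyper' hf hC y
    _ ≤ ∫⁻ y, ∫⁻ v, N (T y + v) ^ q ∂ρπ ∂π := by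
        gcongr with y; exact rpow_lintegral_le_lintegral_rpow (by fun_prop) (by linarith)
    _ = ∫⁻ w, N w ^ q ∂π := by
        rw [← lintegral_map (f := fun x => ∫⁻ v, N (x + v) ^ q ∂ρπ) (by fun_prop) hT,
          ← lintegral_mconv _ _ (g := fun w => N w ^ q) (by fun_prop), hπ]

/-- If the Gaussian factor of `P_T` is `L^p(γ)`–`L^q(γ)` hypercontractive, then `P_T` is a
contraction for the mixed norm `‖·‖_{p,q}` on bounded Borel functions. -/
theorem PT_mixedNorm_contraction
    {E : Type*} [NormedAddCommGroup E] [NormedSpace ℝ E] [CompleteSpace E]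
    [TopologicalSpace.SeparableSpace E] [MeasurableSpace E] [BorelSpace E]
    (T : E →L[ℝ] E) (γ π ργ ρπ : Measure E)
    [IsProbabilityMeasure γ] [IsProbabilityMeasure π]
    [IsProbabilityMeasure ργ] [IsProbabilityMeasure ρπ]
    (hγ : mconv (γ.map T) ργ = γ) (hπ : mconv (π.map T) ρπ = π)
    (p q : ℝ) (hp : 1 < p) (hpq : p ≤ q)
    (hhyper : ∀ g : E → ℝ, Measurable g → (∃ C, ∀ x, |g x| ≤ C) →
      (∫⁻ x, ENNReal.ofReal (|∫ z, g (T x + z) ∂ργ| ^ q) ∂γ) ^ (1 / q)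
        ≤ (∫⁻ x, ENNReal.ofReal (|g x| ^ p) ∂γ) ^ (1 / p))
    (f : E → ℝ) (hf : Measurable f) (hfb : ∃ C, ∀ x, |f x| ≤ C) :
    mixedNorm p q γ π (fun x => ∫ z, f (T x + z) ∂(mconv ργ ρπ))
      ≤ mixedNorm p q γ π f :=
  PT_mixedNorm_contraction_general T γ π ργ ρπ hπ p q hp hpq hhyper f hf hfb
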